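/- Let γ ∈ [−2,1] and f : ℝ³ → ℝ measurable. For a_{ij}(v) = |v|^{γ+2}(δ_{ij} − v_i v_j/|v|²) and any θ > γ + 4 + 3/2, there is a constant C > 0 such that for all v ∈ ℝ³ and all indices i,j: |(a_{ij} * f)(v) v_i v_j| ≤ C ⟨v⟩^{γ+2} ‖⟨·⟩^θ f‖_{L²(ℝ³)} (with summation over i,j on the left), provided the right-hand side is finite. -/

import Mathlib

/-!
Because `a(z) z = 0`, expanding `v = (v - w) + w` shows that the quadratic form of `a(v - w)`
takes the same value at `v` and at `w`. Hence the integrand is bounded by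
`|v - w|^{γ+2} |w|² ≲ ⟨v⟩^{γ+2} ⟨w⟩^{γ+4}` times `|f(w)|`, and Cauchy–Schwarz against the weight
`⟨w⟩^θ` leaves `‖⟨·⟩^{γ+4-θ}‖_{L²}`, finite because `2(θ - γ - 4) > 3`. If `f` is not measurable,
every integral vanishes: `a_{ij}(v - w) ≠ 0` off a null set, so integrability of `a_{ij}(v - ·) f`
would force measurability of `f`.
-/

open MeasureTheory Real

noncomputable section

abbrev R3 := EuclideanSpace ℝ (Fin 3)

/-- The Japanese bracket ⟨v⟩ = (1 + |v|²)^{1/2}. -/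
def jb (v : R3) : ℝ := Real.sqrt (1 + ‖v‖ ^ 2)

/-- The Landau collision matrix a_{ij}(v) = |v|^{γ+2} (δ_{ij} - v_i v_j / |v|²). -/
def aMat (γ : ℝ) (v : R3) (i j : Fin 3) : ℝ :=
  ‖v‖ ^ (γ + 2) * ((if i = j then (1:ℝ) else 0) - v i * v j / ‖v‖ ^ 2)

lemma one_le_jb (v : R3) : 1 ≤ jb v :=
  Real.one_le_sqrt.mpr (by nlinarith [sq_nonneg ‖v‖])

lemma jb_pos (v : R3) : 0 < jb v := one_pos.trans_le (one_le_jb v)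

lemma norm_le_jb (v : R3) : ‖v‖ ≤ jb v :=
  Real.le_sqrt_of_sq_le (by linarith)

lemma continuous_jb : Continuous jb := by
  unfold jb; fun_prop

lemma continuous_jb_rpow (r : ℝ) : Continuous fun w : R3 => jb w ^ r :=
  continuous_jb.rpow_const fun w => Or.inl (jb_pos w).ne'

lemma norm_sub_le_two_mul_jb (v w : R3) : ‖v - w‖ ≤ 2 * jb v * jb w := by
  have := one_le_jb v; have := one_le_jb w
  nlinarith [norm_sub_le v w, norm_le_jb v, norm_le_jb w]

lemma rpow_norm_sub_le {p : ℝ} (hp : 0 ≤ p) (v w : R3) :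
    ‖v - w‖ ^ p ≤ 2 ^ p * jb v ^ p * jb w ^ p := by
  rw [← Real.mul_rpow zero_le_two (jb_pos v).le,
    ← Real.mul_rpow (by linarith [jb_pos v]) (jb_pos w).le]
  exact Real.rpow_le_rpow (norm_nonneg _) (norm_sub_le_two_mul_jb v w) hp

lemma memLp_two_jb_rpow {r : ℝ} (hr : 2 * r < -3) : MemLp (fun w : R3 => jb w ^ r) 2 := by
  refine (memLp_two_iff_integrable_sq (continuous_jb_rpow r).aestronglyMeasurable).2 ?_
  have hdim : (Module.finrank ℝ R3 : ℝ) < -(2 * r) := by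
    rw [finrank_euclideanSpace_fin]; push_cast; linarith
  refine (integrable_rpow_neg_one_add_norm_sq hdim).congr (ae_of_all _ fun w => ?_)
  dsimp only
  rw [jb, Real.sqrt_eq_rpow, ← Real.rpow_mul (by positivity), ← Real.rpow_mul_natCast
    (by positivity)]
  ring_nf

lemma aMat_comm (γ : ℝ) (z : R3) (i j : Fin 3) : aMat γ z i j = aMat γ z j i := by
  simp only [aMat, eq_comm (a := i), mul_comm (z i)]

lemma abs_aMat_le (γ : ℝ) (z : R3) (i j : Fin 3) : |aMat γ z i j| ≤ ‖z‖ ^ (γ + 2) := by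
  rw [aMat, abs_mul, abs_of_nonneg (by positivity)]
  refine mul_le_of_le_one_right (by positivity) ?_
  have hzi : z i ^ 2 ≤ ‖z‖ ^ 2 := by
    simpa [sq_abs] using pow_le_pow_left₀ (norm_nonneg _) (PiLp.norm_apply_le z i) 2
  have hzj : z j ^ 2 ≤ ‖z‖ ^ 2 := by
    simpa [sq_abs] using pow_le_pow_left₀ (norm_nonneg _) (PiLp.norm_apply_le z j) 2
  rcases (sq_nonneg ‖z‖).eq_or_lt with hz | hz
  · rw [← hz, div_zero, sub_zero]; split_ifs <;> norm_num
  have hprod : |z i * z j| ≤ ‖z‖ ^ 2 := by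
    rw [abs_le]; constructor <;> nlinarith [sq_nonneg (z i + z j), sq_nonneg (z i - z j)]
  split_ifs with hij
  · subst hij
    have h0 : 0 ≤ z i * z i / ‖z‖ ^ 2 := div_nonneg (mul_self_nonneg _) hz.le
    have h1 : z i * z i / ‖z‖ ^ 2 ≤ 1 := (div_le_one hz).2 (by nlinarith)
    rw [abs_le]; constructor <;> linarith
  · rwa [zero_sub, abs_neg, abs_div, abs_of_pos hz, div_le_one hz]

lemma sum_aMat_mul_self (γ : ℝ) (z : R3) (i : Fin 3) : ∑ j, aMat γ z i j * z j = 0 := by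
  rcases eq_or_ne z 0 with rfl | hz
  · simp
  have hn : ‖z‖ ^ 2 ≠ 0 := pow_ne_zero 2 (norm_ne_zero_iff.mpr hz)
  simp only [aMat, mul_assoc, ← Finset.mul_sum, sub_mul, Finset.sum_sub_distrib, ite_mul, one_mul,
    zero_mul, Finset.sum_ite_eq, Finset.mem_univ, if_true]
  rw [show ∑ j, z i * z j / ‖z‖ ^ 2 * z j = z i / ‖z‖ ^ 2 * ∑ j, z j ^ 2 by
    rw [Finset.mul_sum]; exact Finset.sum_congr rfl fun j _ => by ring,
    ← EuclideanSpace.real_norm_sq_eq]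
  field_simp; ring

def aQuad (γ : ℝ) (z x : R3) : ℝ := ∑ i, ∑ j, aMat γ z i j * x i * x j

lemma aQuad_sub_left_eq (γ : ℝ) (x y : R3) : aQuad γ (x - y) x = aQuad γ (x - y) y := by
  set z := x - y
  have hx : ∀ k, x k = z k + y k := fun k => by simp [z]
  have hrow := sum_aMat_mul_self γ z
  have hcol : ∀ j, ∑ i, aMat γ z i j * z i = 0 := fun j => by
    simpa only [aMat_comm γ z _ j] using hrow j
  have expand : aQuad γ z x = aQuad γ z y + ∑ i, z i * ∑ j, aMat γ z i j * z j
      + ∑ j, y j * ∑ i, aMat γ z i j * z i + ∑ i, y i * ∑ j, aMat γ z i j * z j := by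
    simp only [aQuad, hx, Finset.mul_sum]
    rw [Finset.sum_comm (f := fun j i => y j * (aMat γ z i j * z i))]
    simp only [← Finset.sum_add_distrib]
    exact Finset.sum_congr rfl fun i _ => Finset.sum_congr rfl fun j _ => by ring
  simp [expand, hrow, hcol]

lemma abs_aQuad_le (γ : ℝ) (z x : R3) : |aQuad γ z x| ≤ 9 * ‖z‖ ^ (γ + 2) * ‖x‖ ^ 2 := by
  have hterm : ∀ i j, |aMat γ z i j * x i * x j| ≤ ‖z‖ ^ (γ + 2) * ‖x‖ ^ 2 := fun i j => by
    have hi : |x i| ≤ ‖x‖ := by simpa using PiLp.norm_apply_le x i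
    have hj : |x j| ≤ ‖x‖ := by simpa using PiLp.norm_apply_le x j
    rw [abs_mul, abs_mul, mul_assoc, sq]
    exact mul_le_mul (abs_aMat_le γ z i j) (mul_le_mul hi hj (abs_nonneg _) (norm_nonneg _))
      (by positivity) (by positivity)
  calc |aQuad γ z x| ≤ ∑ i : Fin 3, ∑ j : Fin 3, |aMat γ z i j * x i * x j| :=
        (Finset.abs_sum_le_sum_abs _ _).trans
          (Finset.sum_le_sum fun i _ => Finset.abs_sum_le_sum_abs _ _)
    _ ≤ ∑ _i : Fin 3, ∑ _j : Fin 3, ‖z‖ ^ (γ + 2) * ‖x‖ ^ 2 :=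
        Finset.sum_le_sum fun i _ => Finset.sum_le_sum fun j _ => hterm i j
    _ = 9 * ‖z‖ ^ (γ + 2) * ‖x‖ ^ 2 := by simp; ring

lemma abs_aQuad_sub_le {γ : ℝ} (hγ : -2 ≤ γ) (v w : R3) :
    |aQuad γ (v - w) w| ≤ 9 * 2 ^ (γ + 2) * jb v ^ (γ + 2) * jb w ^ (γ + 4) := by
  have := jb_pos v; have := jb_pos w
  have hw : ‖w‖ ^ 2 ≤ jb w ^ 2 := pow_le_pow_left₀ (norm_nonneg _) (norm_le_jb w) 2
  calc |aQuad γ (v - w) w| ≤ 9 * ‖v - w‖ ^ (γ + 2) * ‖w‖ ^ 2 := abs_aQuad_le γ _ w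
    _ ≤ 9 * (2 ^ (γ + 2) * jb v ^ (γ + 2) * jb w ^ (γ + 2)) * jb w ^ 2 :=
        mul_le_mul (by gcongr; exact rpow_norm_sub_le (by linarith) v w) hw (by positivity)
          (by positivity)
    _ = 9 * 2 ^ (γ + 2) * jb v ^ (γ + 2) * jb w ^ (γ + 4) := by
        rw [show γ + 4 = (γ + 2) + 2 by ring, Real.rpow_add (jb_pos w) (γ + 2) 2, Real.rpow_two]
        ring

lemma measurable_aMat_sub (γ : ℝ) (v : R3) (i j : Fin 3) :
    Measurable fun w : R3 => aMat γ (v - w) i j := by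
  unfold aMat; fun_prop

lemma aMat_ne_zero {γ : ℝ} {z : R3} (hz : ∀ k, z k ≠ 0) (i j : Fin 3) : aMat γ z i j ≠ 0 := by
  have hpos : 0 < ‖z‖ := norm_pos_iff.mpr fun h => hz 0 (by simp [h])
  have hsq := EuclideanSpace.real_norm_sq_eq z
  rw [Fin.sum_univ_three] at hsq
  refine mul_ne_zero (Real.rpow_pos_of_pos hpos _).ne' ?_
  have := hz 0; have := hz 1; have := hz 2
  split_ifs with hij
  · subst hij
    rw [sub_ne_zero, ne_comm, Ne, div_eq_one_iff_eq (by positivity)]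
    intro h
    fin_cases i <;> simp at h <;> nlinarith [sq_pos_of_ne_zero ‹z 0 ≠ 0›,
      sq_pos_of_ne_zero ‹z 1 ≠ 0›, sq_pos_of_ne_zero ‹z 2 ≠ 0›]
  · simp [hz i, hz j, hpos.ne']

lemma volume_setOf_apply_eq_zero {ι : Type*} [Fintype ι] (k : ι) :
    volume {z : EuclideanSpace ℝ ι | z k = 0} = 0 := by
  classical
  refine Measure.addHaar_submodule volume (LinearMap.ker (EuclideanSpace.proj k).toLinearMap) ?_
  intro htop
  have h := LinearMap.mem_ker.mp (htop ▸ Submodule.mem_top (x := EuclideanSpace.single k (1 : ℝ)))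
  simp at h

lemma ae_aMat_sub_ne_zero (γ : ℝ) (v : R3) (i j : Fin 3) : ∀ᵐ w : R3, aMat γ (v - w) i j ≠ 0 := by
  have hcoord : ∀ᵐ z : R3, ∀ k, z k ≠ 0 :=
    ae_all_iff.mpr fun k => measure_eq_zero_iff_ae_notMem.mp (volume_setOf_apply_eq_zero k)
  filter_upwards [(Measure.measurePreserving_sub_left volume v).quasiMeasurePreserving.ae hcoord]
    with w hw using aMat_ne_zero hw i j

lemma MeasureTheory.AEStronglyMeasurable.of_mul_left {α : Type*} [MeasurableSpace α]
    {μ : Measure α} {g f : α → ℝ} (hg : AEMeasurable g μ) (hg0 : ∀ᵐ x ∂μ, g x ≠ 0)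
    (hgf : AEStronglyMeasurable (fun x => g x * f x) μ) : AEStronglyMeasurable f μ := by
  refine (hgf.aemeasurable.div hg).aestronglyMeasurable.congr ?_
  filter_upwards [hg0] with x hx using mul_div_cancel_left₀ (f x) hx

lemma integral_aMat_mul_eq_zero {f : R3 → ℝ} (hf : ¬AEStronglyMeasurable f) (γ : ℝ) (v : R3)
    (i j : Fin 3) : ∫ w, aMat γ (v - w) i j * f w = 0 :=
  integral_undef fun hint => hf <| hint.aestronglyMeasurable.of_mul_left
    (measurable_aMat_sub γ v i j).aemeasurable
    (ae_aMat_sub_ne_zero γ v i j)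

lemma integral_abs_mul_abs_le {α : Type*} [MeasurableSpace α] {μ : Measure α} {g h : α → ℝ}
    (hg : MemLp g 2 μ) (hh : MemLp h 2 μ) :
    ∫ x, |g x| * |h x| ∂μ ≤ (∫ x, g x ^ 2 ∂μ) ^ (1 / 2 : ℝ) * (∫ x, h x ^ 2 ∂μ) ^ (1 / 2 : ℝ) := by
  have key := integral_mul_norm_le_Lp_mul_Lq (μ := μ) Real.HolderConjugate.two_two
    (by simpa using hg) (by simpa using hh)
  simpa only [Real.norm_eq_abs, Real.rpow_two, sq_abs] using key

section Weighted

variable {f : R3 → ℝ} {r θ : ℝ}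

lemma jb_rpow_sub_mul (w : R3) : jb w ^ (r - θ) * (jb w ^ θ * f w) = jb w ^ r * f w := by
  rw [← mul_assoc, ← Real.rpow_add (jb_pos w), sub_add_cancel]

lemma integrable_jb_rpow_mul (hr : 2 * (r - θ) < -3) (hf : MemLp (fun w => jb w ^ θ * f w) 2) :
    Integrable fun w => jb w ^ r * f w :=
  ((memLp_two_jb_rpow hr).integrable_mul hf).congr (ae_of_all _ jb_rpow_sub_mul)

lemma integral_jb_rpow_mul_abs_le (hr : 2 * (r - θ) < -3)
    (hf : MemLp (fun w => jb w ^ θ * f w) 2) :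
    ∫ w, |jb w ^ r * f w| ≤ (∫ w, (jb w ^ (r - θ)) ^ 2) ^ (1 / 2 : ℝ)
      * (∫ w, (jb w ^ θ * f w) ^ 2) ^ (1 / 2 : ℝ) := by
  convert integral_abs_mul_abs_le (memLp_two_jb_rpow hr) hf using 3 with w
  rw [← abs_mul, jb_rpow_sub_mul]

end Weighted

lemma sum_integral_aMat_mul_eq {γ : ℝ} {f : R3 → ℝ} {v : R3}
    (hint : ∀ i j, Integrable fun w => aMat γ (v - w) i j * f w) :
    ∑ i, ∑ j, (∫ w, aMat γ (v - w) i j * f w) * v i * v j = ∫ w, aQuad γ (v - w) w * f w := by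
  have hint' : ∀ i j, Integrable fun w => aMat γ (v - w) i j * f w * v i * v j :=
    fun i j => ((hint i j).mul_const _).mul_const _
  calc _ = ∫ w, ∑ i, ∑ j, aMat γ (v - w) i j * f w * v i * v j := by
        rw [integral_finsetSum _ fun i _ => integrable_finsetSum _ fun j _ => hint' i j]
        refine Finset.sum_congr rfl fun i _ => ?_
        rw [integral_finsetSum _ fun j _ => hint' i j]
        exact Finset.sum_congr rfl fun j _ => by rw [integral_mul_const, integral_mul_const]
    _ = ∫ w, aQuad γ (v - w) v * f w := by
        simp only [aQuad, Finset.sum_mul]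
        exact integral_congr_ae (ae_of_all _ fun w => Finset.sum_congr rfl fun i _ =>
          Finset.sum_congr rfl fun j _ => by ring)
    _ = _ := integral_congr_ae (ae_of_all _ fun w =>
        congrArg (· * f w) (aQuad_sub_left_eq γ v w))

lemma integrable_aMat_sub_mul {γ : ℝ} (hγ : -2 ≤ γ) {f : R3 → ℝ} (hf : AEStronglyMeasurable f)
    (h2 : Integrable fun w => jb w ^ (γ + 2) * f w) (v : R3) (i j : Fin 3) :
    Integrable fun w => aMat γ (v - w) i j * f w := by
  refine (h2.norm.const_mul (2 ^ (γ + 2) * jb v ^ (γ + 2))).mono'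
    ((measurable_aMat_sub γ v i j).aestronglyMeasurable.mul hf) (ae_of_all _ fun w => ?_)
  simp only [norm_mul, Real.norm_eq_abs, abs_of_pos (Real.rpow_pos_of_pos (jb_pos w) (γ + 2))]
  calc |aMat γ (v - w) i j| * |f w|
      ≤ 2 ^ (γ + 2) * jb v ^ (γ + 2) * jb w ^ (γ + 2) * |f w| := by
        gcongr
        exact (abs_aMat_le γ _ i j).trans (rpow_norm_sub_le (by linarith) v w)
    _ = _ := by ring

lemma abs_sum_integral_aMat_le {γ : ℝ} (hγ : -2 ≤ γ) {f : R3 → ℝ} (hf : AEStronglyMeasurable f)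
    (h2 : Integrable fun w => jb w ^ (γ + 2) * f w)
    (h4 : Integrable fun w => jb w ^ (γ + 4) * f w) (v : R3) :
    |∑ i, ∑ j, (∫ w, aMat γ (v - w) i j * f w) * v i * v j|
      ≤ 9 * 2 ^ (γ + 2) * jb v ^ (γ + 2) * ∫ w, |jb w ^ (γ + 4) * f w| := by
  rw [sum_integral_aMat_mul_eq (integrable_aMat_sub_mul hγ hf h2 v), ← Real.norm_eq_abs,
    ← integral_const_mul]
  refine norm_integral_le_of_norm_le (h4.abs.const_mul _) (ae_of_all _ fun w => ?_)
  rw [norm_mul, Real.norm_eq_abs, Real.norm_eq_abs, abs_mul _ (f w),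
    abs_of_pos (Real.rpow_pos_of_pos (jb_pos w) (γ + 4)), ← mul_assoc]
  gcongr
  exact abs_aQuad_sub_le hγ v w

theorem stmt8 (γ θ : ℝ) (hγ : γ ∈ Set.Icc (-2:ℝ) 1) (hθ : γ + 4 + 3/2 < θ) :
    ∃ C : ℝ, 0 < C ∧ ∀ f : R3 → ℝ,
      Integrable (fun w : R3 => (jb w ^ θ * f w) ^ 2) →
      ∀ v : R3,
        |∑ i, ∑ j, (∫ w : R3, aMat γ (v - w) i j * f w) * v i * v j|
          ≤ C * jb v ^ (γ + 2) * (∫ w : R3, (jb w ^ θ * f w) ^ 2) ^ ((1:ℝ)/2) := by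
  set D := (∫ w : R3, (jb w ^ (γ + 4 - θ)) ^ 2) ^ (1 / 2 : ℝ)
  have hC : 0 < 9 * 2 ^ (γ + 2) * D + 1 := by positivity
  refine ⟨_, hC, fun f hf v => ?_⟩
  set M := (∫ w : R3, (jb w ^ θ * f w) ^ 2) ^ ((1:ℝ)/2)
  have hM : 0 ≤ M := by positivity
  have hv : 0 ≤ jb v ^ (γ + 2) := (Real.rpow_pos_of_pos (jb_pos v) _).le
  by_cases hfm : AEStronglyMeasurable f
  · have hL2 : MemLp (fun w => jb w ^ θ * f w) 2 := (memLp_two_iff_integrable_sq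
      ((continuous_jb_rpow θ).aestronglyMeasurable.mul hfm)).2 hf
    calc _ ≤ 9 * 2 ^ (γ + 2) * jb v ^ (γ + 2) * ∫ w, |jb w ^ (γ + 4) * f w| :=
          abs_sum_integral_aMat_le hγ.1 hfm (integrable_jb_rpow_mul (by linarith) hL2)
            (integrable_jb_rpow_mul (by linarith) hL2) v
      _ ≤ 9 * 2 ^ (γ + 2) * jb v ^ (γ + 2) * (D * M) := by
          gcongr
          exact integral_jb_rpow_mul_abs_le (by linarith) hL2
      _ ≤ _ := by nlinarith [mul_nonneg hv hM]
  · simp only [integral_aMat_mul_eq_zero hfm, zero_mul, Finset.sum_const_zero, abs_zero]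
    exact mul_nonneg (mul_nonneg hC.le hv) hM
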